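/- arXiv:1802.04241 — 2 statements merged into one kernel-verified Lean document; each statement's English description precedes it below -/
import Mathlib

section
/- Define E_{2n,q} := (-1)^n [2n]_q! \Delta_{n,q}. Then \sum_{n \ge 0} E_{2n,q} t^{2n}/(q;q)_{2n} = sech_q(t) as formal power series over Q(q), i.e., (\sum_{n\ge0} E_{2n,q} t^{2n}/(q;q)_{2n}) \cdot cosh_q(t) = 1. -/
/-- The `q`-integer `[m]_q = 1 + q + ⋯ + q^{m-1}`. -/
noncomputable def qInt {K : Type*} [Field K] (q : K) (m : ℕ) : K :=
  ∑ i ∈ Finset.range m, q ^ i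

/-- The `q`-factorial `[m]_q! = [1]_q [2]_q ⋯ [m]_q`. -/
noncomputable def qFact {K : Type*} [Field K] (q : K) : ℕ → K
  | 0 => 1
  | m + 1 => qFact q m * qInt q (m + 1)

/-- The `q`-Pochhammer symbol `(q;q)_m = (1-q)(1-q²)⋯(1-q^m)`. -/
noncomputable def qPoch {K : Type*} [Field K] (q : K) (m : ℕ) : K :=
  ∏ i ∈ Finset.range m, (1 - q ^ (i + 1))

/-- Determinant of the `n × n` lower Hessenberg matrix with `(i,j)` entry `1` if `j = i+1`,
`0` if `j > i+1`, and `f (i-j)` if `j ≤ i`. -/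
noncomputable def hessDet {K : Type*} [Field K] (f : ℕ → K) (n : ℕ) : K :=
  Matrix.det (Matrix.of fun i j : Fin n =>
    if (j : ℕ) = (i : ℕ) + 1 then 1
    else if (i : ℕ) + 1 < (j : ℕ) then 0
    else f ((i : ℕ) - (j : ℕ)))

/-- `Δ_{n,q}` in `ℚ(q)` with `q = X`. -/
noncomputable def DeltaQ (n : ℕ) : RatFunc ℚ :=
  hessDet (fun k => (qFact (RatFunc.X : RatFunc ℚ) (2 * k + 2))⁻¹) n

/-- `E_{2n,q} := (-1)^n [2n]_q! Δ_{n,q}`. -/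
noncomputable def Esec (n : ℕ) : RatFunc ℚ :=
  (-1) ^ n * qFact (RatFunc.X : RatFunc ℚ) (2 * n) * DeltaQ n

/-- `cosh_q(t) = ∑ t^{2n}/(q;q)_{2n}` in `ℚ(q)[[t]]`. -/
noncomputable def coshQ : PowerSeries (RatFunc ℚ) :=
  PowerSeries.mk fun m => if m % 2 = 0 then (qPoch (RatFunc.X : RatFunc ℚ) m)⁻¹ else 0

/-!
Expanding the Hessenberg determinant along its first column gives the recurrence
`Δ_{n+1} = ∑_{i+j=n} (-1)^i f(i) Δ_j`, which says precisely that `∑ (-1)^n Δ_n x^n` is the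
inverse of `1 + ∑ f(k) x^{k+1}`. With `f(k) = 1/[2k+2]_q!` the latter is `∑ x^n/[2n]_q!`.
Substituting `x = (t/(1-q))^2` turns `[2n]_q!` into `(q;q)_{2n}` and this series into `cosh_q(t)`,
while `(-1)^n Δ_n (t/(1-q))^{2n} = E_{2n,q} t^{2n}/(q;q)_{2n}`.
-/

open PowerSeries

section Hessenberg

variable {K : Type*} [Field K] (f : ℕ → K)

noncomputable def hessMat (n : ℕ) : Matrix (Fin n) (Fin n) K :=
  Matrix.of fun i j : Fin n =>
    if (j : ℕ) = (i : ℕ) + 1 then 1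
    else if (i : ℕ) + 1 < (j : ℕ) then 0
    else f ((i : ℕ) - (j : ℕ))

theorem hessDet_eq_det_hessMat (n : ℕ) : hessDet f n = (hessMat f n).det := rfl

theorem hessMat_succ_succ {n : ℕ} (i j : Fin n) :
    hessMat f (n + 1) i.succ j.succ = hessMat f n i j := by
  simp only [hessMat, Matrix.of_apply, Fin.val_succ, Nat.add_right_cancel_iff,
    Nat.add_lt_add_iff_right, Nat.add_sub_add_right]

theorem hessMat_zero_succ {n : ℕ} (j : Fin (n + 1)) :
    hessMat f (n + 2) 0 j.succ = if j = 0 then 1 else 0 := by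
  simp only [hessMat, Matrix.of_apply, Fin.val_succ, Fin.val_zero, Nat.add_right_cancel_iff,
    Fin.val_eq_zero_iff, Nat.add_lt_add_iff_right, Nat.pos_iff_ne_zero]
  split_ifs <;> simp_all

/-- Deleting row `i` and the first column leaves a block lower triangular matrix whose diagonal
blocks are unitriangular of size `i` and `hessMat f (n - i)`. -/
theorem det_hessMat_submatrix_succAbove_succ :
    ∀ (n : ℕ) (i : Fin (n + 1)),
      ((hessMat f (n + 1)).submatrix i.succAbove Fin.succ).det = hessDet f (n - i)
  | 0, i => by
    fin_cases i
    simp [hessDet]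
  | n + 1, i => by
    induction i using Fin.cases with
    | zero =>
      have hmat :
          (hessMat f (n + 2)).submatrix (Fin.succAbove 0) Fin.succ = hessMat f (n + 1) := by
        ext r c
        simp only [Matrix.submatrix_apply, Fin.succAbove_zero, hessMat_succ_succ]
      rw [hmat, hessDet_eq_det_hessMat, Fin.val_zero, Nat.sub_zero]
    | succ j =>
      rw [Matrix.det_succ_row_zero, Fintype.sum_eq_single 0 fun c hc => by
        simp [Fin.succAbove_ne_zero_zero, hessMat_zero_succ, hc]]
      have hminor : ((hessMat f (n + 2)).submatrix j.succ.succAbove Fin.succ).submatrix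
          Fin.succ (Fin.succAbove 0) = (hessMat f (n + 1)).submatrix j.succAbove Fin.succ := by
        ext r c
        simp only [Matrix.submatrix_apply, Fin.succAbove_zero, Fin.succ_succAbove_succ,
          hessMat_succ_succ]
      rw [hminor, det_hessMat_submatrix_succAbove_succ n j]
      simp [hessMat]

open Finset in
theorem hessDet_succ (n : ℕ) :
    hessDet f (n + 1) = ∑ p ∈ antidiagonal n, (-1) ^ p.1 * f p.1 * hessDet f p.2 := by
  rw [Finset.Nat.sum_antidiagonal_eq_sum_range_succ (fun i j => (-1) ^ i * f i * hessDet f j),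
    ← Fin.sum_univ_eq_sum_range, hessDet_eq_det_hessMat, Matrix.det_succ_column_zero]
  refine Finset.sum_congr rfl fun i _ => ?_
  rw [det_hessMat_submatrix_succAbove_succ]
  simp [hessMat]

theorem hessDet_series_mul :
    mk (fun n => (-1) ^ n * hessDet f n) * (1 + X * mk f) = 1 := by
  ext (_ | n)
  · simp [hessDet]
  rw [mul_add, mul_one, mul_left_comm, map_add, coeff_succ_X_mul, coeff_mul, coeff_mk,
    hessDet_succ, Finset.mul_sum, ← Finset.Nat.sum_antidiagonal_swap, ← Finset.sum_add_distrib,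
    coeff_one, if_neg n.succ_ne_zero]
  refine Finset.sum_eq_zero fun ⟨i, j⟩ hij => ?_
  obtain rfl : i + j = n := Finset.HasAntidiagonal.mem_antidiagonal.mp hij
  have hsign : (-1 : K) ^ (i + j + 1) * (-1) ^ j = -(-1) ^ i := by
    rw [← pow_add, show i + j + 1 + j = i + 1 + 2 * j by ring, pow_add, pow_mul]
    simp [pow_succ]
  simp only [Prod.swap, coeff_mk]
  linear_combination (f j * hessDet f i) * hsign

end Hessenberg

theorem mk_ite_even_eq_rescale_expand {R : Type*} [CommRing R] (g a : ℕ → R) (r : R)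
    (h : ∀ n, g (2 * n) = r ^ (2 * n) * a n) :
    mk (fun m => if m % 2 = 0 then g m else 0) = rescale r (expand 2 two_ne_zero (mk a)) := by
  ext m
  obtain ⟨n, rfl | rfl⟩ := Nat.even_or_odd' m
  · simp [h]
  · simp [coeff_expand_of_not_dvd _ _ _ (Nat.two_not_dvd_two_mul_add_one n)]

section QAnalogues

variable {K : Type*} [Field K]

theorem qPoch_eq_qFact_mul (q : K) (m : ℕ) : qPoch q m = qFact q m * (1 - q) ^ m := by
  induction m with
  | zero => simp [qPoch, qFact]
  | succ m ih =>
    rw [qPoch, Finset.prod_range_succ, ← qPoch, ih, qFact, qInt, ← geom_sum_mul_neg, pow_succ]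
    ring

theorem inv_qPoch (q : K) (m : ℕ) : (qPoch q m)⁻¹ = (1 - q)⁻¹ ^ m * (qFact q m)⁻¹ := by
  rw [qPoch_eq_qFact_mul, mul_inv, inv_pow, mul_comm]

theorem qPoch_X_ne_zero (m : ℕ) : qPoch (RatFunc.X : RatFunc K) m ≠ 0 :=
  Finset.prod_ne_zero_iff.mpr fun i _ => sub_ne_zero.mpr <| Ne.symm <| by
    rw [← RatFunc.algebraMap_X, ← map_pow, ← map_one (algebraMap (Polynomial K) (RatFunc K)),
      (RatFunc.algebraMap_injective K).ne_iff, ← Polynomial.C_1, ← sub_ne_zero]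
    exact Polynomial.X_pow_sub_C_ne_zero i.succ_pos 1

theorem qFact_X_ne_zero (m : ℕ) : qFact (RatFunc.X : RatFunc K) m ≠ 0 :=
  left_ne_zero_of_mul (qPoch_eq_qFact_mul (RatFunc.X : RatFunc K) m ▸ qPoch_X_ne_zero m)

theorem one_sub_X_ne_zero : (1 : RatFunc K) - RatFunc.X ≠ 0 := by
  simpa [qPoch] using qPoch_X_ne_zero (K := K) 1

end QAnalogues

theorem Esec_div_qPoch (n : ℕ) :
    Esec n / qPoch RatFunc.X (2 * n) = (1 - RatFunc.X)⁻¹ ^ (2 * n) * ((-1) ^ n * DeltaQ n) := by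
  have hfact := qFact_X_ne_zero (K := ℚ) (2 * n)
  have hX := one_sub_X_ne_zero (K := ℚ)
  rw [Esec, qPoch_eq_qFact_mul, inv_pow]
  field_simp

theorem DeltaQ_series_mul_qcosh :
    mk (fun n => (-1) ^ n * DeltaQ n) * mk (fun n => (qFact (RatFunc.X : RatFunc ℚ) (2 * n))⁻¹)
      = 1 := by
  have hcosh : mk (fun n => (qFact (RatFunc.X : RatFunc ℚ) (2 * n))⁻¹)
      = 1 + X * mk fun k => (qFact RatFunc.X (2 * k + 2))⁻¹ := by
    ext (_ | n)
    · simp [qFact]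
    · rw [map_add, coeff_succ_X_mul, coeff_one, if_neg n.succ_ne_zero, zero_add, coeff_mk,
        coeff_mk, mul_add_one]
  rw [hcosh]
  exact hessDet_series_mul _

/-- `∑_{n≥0} E_{2n,q} t^{2n}/(q;q)_{2n} = sech_q(t)`, i.e. the left-hand series times
`cosh_q(t)` equals `1`, as formal power series over `ℚ(q)`. -/
theorem stmt5 :
    (PowerSeries.mk fun m =>
        if m % 2 = 0 then Esec (m / 2) / qPoch (RatFunc.X : RatFunc ℚ) m else 0) * coshQ
      = 1 := by
  have hE (n : ℕ) : Esec (2 * n / 2) / qPoch RatFunc.X (2 * n)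
      = (1 - RatFunc.X)⁻¹ ^ (2 * n) * ((-1) ^ n * DeltaQ n) := by
    rw [Nat.mul_div_cancel_left n two_pos, Esec_div_qPoch]
  rw [mk_ite_even_eq_rescale_expand _ _ _ hE, coshQ,
    mk_ite_even_eq_rescale_expand _ _ _ fun n => inv_qPoch _ (2 * n), ← map_mul, ← map_mul,
    DeltaQ_series_mul_qcosh, map_one, map_one]
end

section
/- The q-exponential generating function F(t,x) = \sum_{n\ge0} h_n(t) x^n/[n]_q! of the sequence defined by h_0 = 1 and h_n = 1 + t \sum_{i=1}^{n} [i-1]_t \binom{n}{i}_q h_{n-i} satisfies F(t,x) = (t-1) e_q(x) / (t e_q(x) - e_q(tx)), i.e., F(t,x) (t e_q(x) - e_q(tx)) = (t-1) e_q(x). -/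
noncomputable def qBinom {K : Type*} [Field K] (q : K) (n k : ℕ) : K :=
  qFact q n / (qFact q k * qFact q (n - k))

/-- The field `ℚ(q,t)` of rational functions in the two variables `q` and `t`. -/
abbrev Kqt : Type := RatFunc (RatFunc ℚ)

/-- The variable `q` in `ℚ(q,t)`. -/
noncomputable def qv : Kqt := RatFunc.C RatFunc.X

/-- The variable `t` in `ℚ(q,t)`. -/
noncomputable def tv : Kqt := RatFunc.X

/-- The `q`-exponential `e_q(x) = ∑ x^n/[n]_q!` in `ℚ(q,t)[[x]]`. -/
noncomputable def eqS : PowerSeries Kqt := PowerSeries.mk fun n => (qFact qv n)⁻¹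

/-- `e_q(tx) = ∑ t^n x^n/[n]_q!` in `ℚ(q,t)[[x]]`. -/
noncomputable def eqtS : PowerSeries Kqt := PowerSeries.mk fun n => tv ^ n / qFact qv n

/-!
Multiplying by `[n]_q!`, the `n`-th coefficient of `F(t,x) (t e_q(x) - e_q(tx))` becomes the
`q`-binomial convolution `∑_k [n choose k]_q (t - t^k) h_{n-k}`. The term `k = 0` is `(t - 1) h_n`,
and for `k ≥ 1` one has `t - t^k = -(t - 1) t [k-1]_t`, so by the recurrence the remaining terms
add up to `-(t - 1)(h_n - 1)`. Hence every coefficient equals `(t - 1)/[n]_q!`.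
-/

open PowerSeries Finset

section QAnalogues

variable {K : Type*} [Field K]

noncomputable def qEGF (q : K) (a : ℕ → K) : PowerSeries K :=
  PowerSeries.mk fun n => a n / qFact q n

theorem qInt_ne_zero {q : K} {m : ℕ} (hq : q ^ m ≠ 1) : qInt q m ≠ 0 := by
  intro h0
  have h := geom_sum_mul q m
  change qInt q m * (q - 1) = q ^ m - 1 at h
  rw [h0, zero_mul] at h
  exact hq (sub_eq_zero.1 h.symm)

theorem qFact_ne_zero {q : K} (hq : ∀ m, 0 < m → q ^ m ≠ 1) (n : ℕ) : qFact q n ≠ 0 := by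
  induction n with
  | zero => exact one_ne_zero
  | succ m ih => exact mul_ne_zero ih (qInt_ne_zero (hq _ m.succ_pos))

theorem qBinom_zero_right {q : K} {n : ℕ} (hn : qFact q n ≠ 0) : qBinom q n 0 = 1 := by
  simp [qBinom, qFact, hn]

theorem mul_sub_one_mul_qInt (t : K) (k : ℕ) : t * (t - 1) * qInt t k = t ^ (k + 1) - t := by
  rw [qInt, mul_assoc, mul_comm (t - 1), geom_sum_mul]
  ring

theorem coeff_qEGF_mul_qEGF {q : K} (hq : ∀ n, qFact q n ≠ 0) (a b : ℕ → K) (n : ℕ) :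
    coeff n (qEGF q a * qEGF q b)
      = (∑ k ∈ range (n + 1), qBinom q n k * a k * b (n - k)) / qFact q n := by
  rw [coeff_mul, Nat.sum_antidiagonal_eq_sum_range_succ fun i j =>
    coeff i (qEGF q a) * coeff j (qEGF q b), sum_div]
  refine sum_congr rfl fun k _ => ?_
  simp only [qEGF, coeff_mk, qBinom]
  field_simp [hq k, hq (n - k), hq n]

theorem sum_qBinom_mul_sub_pow_mul {q t : K} (hq : ∀ n, qFact q n ≠ 0) {h : ℕ → K}
    (h0 : h 0 = 1)
    (hrec : ∀ n : ℕ, 1 ≤ n →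
      h n = 1 + t * ∑ i ∈ Icc 1 n, qInt t (i - 1) * qBinom q n i * h (n - i))
    (n : ℕ) : ∑ k ∈ range (n + 1), qBinom q n k * (t - t ^ k) * h (n - k) = t - 1 := by
  obtain _ | n := n
  · simp [qBinom, qFact, h0]
  have htail :
      ∑ k ∈ range (n + 1), qBinom q (n + 1) (k + 1) * (t - t ^ (k + 1)) * h (n + 1 - (k + 1))
        = -(t - 1) * (h (n + 1) - 1) := by
    rw [hrec (n + 1) n.succ_pos, add_sub_cancel_left, ← Ico_add_one_right_eq_Icc,
      sum_Ico_eq_sum_range, mul_sum, mul_sum]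
    refine sum_congr rfl fun k _ => ?_
    rw [add_tsub_cancel_left, add_comm 1 k]
    linear_combination qBinom q (n + 1) (k + 1) * h (n + 1 - (k + 1)) * mul_sub_one_mul_qInt t k
  rw [sum_range_succ', htail, qBinom_zero_right (hq _), pow_zero, Nat.sub_zero]
  ring

theorem qEGF_mul_qEGF_sub_pow {q t : K} (hq : ∀ n, qFact q n ≠ 0) {h : ℕ → K} (h0 : h 0 = 1)
    (hrec : ∀ n : ℕ, 1 ≤ n →
      h n = 1 + t * ∑ i ∈ Icc 1 n, qInt t (i - 1) * qBinom q n i * h (n - i)) :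
    qEGF q h * qEGF q (fun k => t - t ^ k) = qEGF q fun _ => t - 1 := by
  ext n
  rw [mul_comm, coeff_qEGF_mul_qEGF hq, sum_qBinom_mul_sub_pow_mul hq h0 hrec, qEGF, coeff_mk]

end QAnalogues

theorem qv_pow_ne_one (m : ℕ) (hm : 0 < m) : qv ^ m ≠ 1 := by
  rw [qv, ← map_pow, ← map_one RatFunc.C, Ne, RatFunc.C_injective.eq_iff, ← RatFunc.algebraMap_X,
    ← map_pow, ← map_one (algebraMap (Polynomial ℚ) (RatFunc ℚ)),
    (RatFunc.algebraMap_injective ℚ).eq_iff]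
  exact fun h => hm.ne' (by simpa using congrArg Polynomial.natDegree h)

/-- If `h 0 = 1` and `h n = 1 + t ∑_{i=1}^{n} [i-1]_t [n choose i]_q h_{n-i}`, then
`F(t,x) = ∑ h_n x^n/[n]_q!` satisfies `F(t,x)(t e_q(x) - e_q(tx)) = (t-1) e_q(x)`. -/
theorem stmt12 (h : ℕ → Kqt) (h0 : h 0 = 1)
    (hrec : ∀ n : ℕ, 1 ≤ n →
      h n = 1 + tv * ∑ i ∈ Finset.Icc 1 n, qInt tv (i - 1) * qBinom qv n i * h (n - i)) :
    (PowerSeries.mk fun n => h n / qFact qv n) * (PowerSeries.C (R := Kqt) tv * eqS - eqtS)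
      = PowerSeries.C (R := Kqt) (tv - 1) * eqS := by
  have hq := qFact_ne_zero qv_pow_ne_one
  have hdiff : PowerSeries.C tv * eqS - eqtS = qEGF qv fun k => tv - tv ^ k := by
    ext n
    simp only [eqS, eqtS, qEGF, map_sub, coeff_C_mul, coeff_mk]
    ring
  have hrhs : PowerSeries.C (tv - 1) * eqS = qEGF qv fun _ => tv - 1 := by
    ext n
    simp only [eqS, qEGF, coeff_C_mul, coeff_mk]
    ring
  rw [hdiff, hrhs]
  exact qEGF_mul_qEGF_sub_pow hq h0 hrec
end
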